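/- For the N-qubit one-axis twisted state |ψ⟩ = exp(-iθ J_x²/2)|1⟩^{⊗N} (N ≥ 2), one has ⟨σ_{1-}σ_{2-}⟩ = -(1 - cos^{N-2}θ)/8 - (i/2) sin(θ/2) cos^{N-2}(θ/2). -/

import Mathlib

open Matrix Complex Finset

noncomputable section OneAxisTwisting

/-- Pauli x matrix in the basis `{|0⟩, |1⟩}`. -/
def pauliX : Matrix (Fin 2) (Fin 2) ℂ := !![0, 1; 1, 0]

/-- Pauli z matrix in the basis `{|0⟩, |1⟩}`. -/
def pauliZ : Matrix (Fin 2) (Fin 2) ℂ := !![1, 0; 0, -1]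

/-- The single-qubit operator `m` acting on site `k` of `N` qubits (identity elsewhere),
as a matrix on the computational basis indexed by `Fin N → Fin 2`. -/
def siteOp (N : ℕ) (k : Fin N) (m : Matrix (Fin 2) (Fin 2) ℂ) :
    Matrix (Fin N → Fin 2) (Fin N → Fin 2) ℂ :=
  Matrix.of fun s t =>
    m (s k) (t k) * ∏ j ∈ Finset.univ.erase k, (if s j = t j then (1 : ℂ) else 0)

/-- The collective spin operator `J_x = (1/2) Σ_k σ_{k,x}`. -/
def Jx (N : ℕ) : Matrix (Fin N → Fin 2) (Fin N → Fin 2) ℂ :=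
  (1 / 2 : ℂ) • ∑ k : Fin N, siteOp N k pauliX

/-- The all-down state `|1⟩^{⊗N}` as a vector. -/
def allDown (N : ℕ) : (Fin N → Fin 2) → ℂ :=
  fun s => if s = (fun _ => 1) then 1 else 0

/-- The one-axis twisted state `exp(-iθ J_x²/2) |1⟩^{⊗N}`. -/
def oneAxisTwisted (N : ℕ) (θ : ℝ) : (Fin N → Fin 2) → ℂ :=
  (NormedSpace.exp ((-(θ / 2 : ℂ) * Complex.I) • (Jx N * Jx N))).mulVec (allDown N)

/-- Expectation value `⟨ψ|O|ψ⟩` in the one-axis twisted state. -/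
def expVal (N : ℕ) (θ : ℝ) (O : Matrix (Fin N → Fin 2) (Fin N → Fin 2) ℂ) : ℂ :=
  star (oneAxisTwisted N θ) ⬝ᵥ O.mulVec (oneAxisTwisted N θ)


/-- Lowering operator `σ₋ = (σ_x - iσ_y)/2 = |1⟩⟨0|`. -/
def pauliMinus : Matrix (Fin 2) (Fin 2) ℂ := !![0, 0; 1, 0]

/-!
Conjugation by the Hadamard transform `W = H^{⊗N}`, an involution, diagonalizes `J_x`: on the
basis state `s` it becomes the magnetization `m(s) = (1/2) Σ_j ε(s_j)`, `ε = (1, -1)`. Hence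
the twisted state is `W ψ` with `ψ(s) = 2^{-N/2} exp(-iθ m(s)²/2) Π_j ε(s_j)`, while `σ_-`
turns into the rank-one matrix `(x, y) ↦ ε(x)/2`. Split every configuration into the first two
spins and the remaining `N - 2` spins `r`. In `conj ψ(a, r) ψ(b, r)` the terms quadratic in
`m(r)` cancel, so the sum over `r` factorizes over the `N - 2` spins and equals, up to the sign
`ε(a) ε(b)` and a factor `1/4`, `exp(-iθ (m(b)² - m(a)²)/2) cos^{N-2}(θ (m(b) - m(a))/2)`.
What remains is a sum over the 16 configurations `(a, b)` of the first two spins.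
-/

namespace Qubits

section ProductOperators

variable {ι α R : Type*} [Fintype ι] [CommSemiring R]

def piKronecker (m : ι → Matrix α α R) : Matrix (ι → α) (ι → α) R :=
  Matrix.of fun s t => ∏ j, m j (s j) (t j)

@[simp]
lemma piKronecker_apply (m : ι → Matrix α α R) (s t : ι → α) :
    piKronecker m s t = ∏ j, m j (s j) (t j) := rfl

lemma piKronecker_mul [DecidableEq ι] [Fintype α] (m m' : ι → Matrix α α R) :
    piKronecker m * piKronecker m' = piKronecker (m * m') := by
  ext s t
  simp only [mul_apply, piKronecker_apply, Pi.mul_apply, Fintype.prod_sum, prod_mul_distrib]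

lemma piKronecker_one [DecidableEq α] : piKronecker (1 : ι → Matrix α α R) = 1 := by
  ext s t
  simp [one_apply, Fintype.prod_boole, funext_iff]

lemma piKronecker_diagonal [DecidableEq α] (d : ι → α → R) :
    piKronecker (fun j => diagonal (d j)) = diagonal fun s => ∏ j, d j (s j) := by
  ext s t
  simp only [piKronecker_apply, diagonal_apply]
  by_cases h : s = t
  · simp [h]
  · obtain ⟨j, hj⟩ := Function.ne_iff.mp h
    rw [if_neg h]
    exact Finset.prod_eq_zero (Finset.mem_univ j) (if_neg hj)

lemma conjTranspose_piKronecker [StarRing R] (m : ι → Matrix α α R) :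
    (piKronecker m)ᴴ = piKronecker fun j => (m j)ᴴ := by
  ext s t
  simp [conjTranspose_apply, star_prod]

lemma piKronecker_append_apply {p q : ℕ} (m : Fin p → Matrix α α R)
    (m' : Fin q → Matrix α α R) (a b : Fin p → α) (r r' : Fin q → α) :
    piKronecker (Fin.append m m') (Fin.append a r) (Fin.append b r')
      = piKronecker m a b * piKronecker m' r r' := by
  simp [Fin.prod_univ_add]

end ProductOperators

lemma siteOp_eq_piKronecker (N : ℕ) (k : Fin N) (m : Matrix (Fin 2) (Fin 2) ℂ) :
    siteOp N k m = piKronecker (Pi.mulSingle k m) := by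
  ext s t
  rw [siteOp, of_apply, piKronecker_apply, ← Finset.mul_prod_erase _ _ (Finset.mem_univ k)]
  congr 1
  · simp
  · refine Finset.prod_congr rfl fun j hj => ?_
    simp [(Finset.mem_erase.mp hj).1, one_apply]

def spinSign : Fin 2 → ℂ := ![1, -1]

lemma pauliZ_eq_diagonal : pauliZ = diagonal spinSign := by
  ext i j; fin_cases i <;> fin_cases j <;> simp [pauliZ, spinSign]

lemma star_spinSign (x : Fin 2) : star (spinSign x) = spinSign x := by
  fin_cases x <;> simp [spinSign]

lemma spinSign_mul_self (x : Fin 2) : spinSign x * spinSign x = 1 := by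
  fin_cases x <;> simp [spinSign]

def hadamard : Matrix (Fin 2) (Fin 2) ℂ := (Real.sqrt 2 : ℂ)⁻¹ • !![1, 1; 1, -1]

lemma inv_sqrt_two_mul_self : (Real.sqrt 2 : ℂ)⁻¹ * (Real.sqrt 2 : ℂ)⁻¹ = 2⁻¹ := by
  rw [← mul_inv, ← ofReal_mul, Real.mul_self_sqrt zero_le_two, ofReal_ofNat]

lemma hadamard_mul_self : hadamard * hadamard = 1 := by
  rw [hadamard, smul_mul_smul_comm, inv_sqrt_two_mul_self]
  ext i j; fin_cases i <;> fin_cases j <;> norm_num [mul_apply]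

lemma conjTranspose_hadamard : hadamardᴴ = hadamard := by
  ext i j; fin_cases i <;> fin_cases j <;> simp [hadamard]

lemma hadamard_apply_one (x : Fin 2) : hadamard x 1 = (Real.sqrt 2 : ℂ)⁻¹ * spinSign x := by
  fin_cases x <;> simp [hadamard, spinSign]

lemma hadamard_conj_pauliX : hadamard * pauliX * hadamard = pauliZ := by
  rw [hadamard, smul_mul, smul_mul_smul_comm, inv_sqrt_two_mul_self]
  ext i j; fin_cases i <;> fin_cases j <;> norm_num [mul_apply, pauliX, pauliZ]

lemma hadamard_conj_pauliMinus_apply (x y : Fin 2) :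
    (hadamard * pauliMinus * hadamard) x y = spinSign x / 2 := by
  rw [hadamard, smul_mul, smul_mul_smul_comm, inv_sqrt_two_mul_self]
  fin_cases x <;> fin_cases y <;> norm_num [mul_apply, pauliMinus, spinSign]

section Involution

variable {n : Type*} [Fintype n] [DecidableEq n] {U : Matrix n n ℂ}

lemma conj_mul_conj_of_mul_self (hU : U * U = 1) (A B : Matrix n n ℂ) :
    (U * A * U) * (U * B * U) = U * (A * B) * U := by
  simp only [Matrix.mul_assoc]
  rw [← Matrix.mul_assoc U U, hU, Matrix.one_mul]

lemma conj_conj_of_mul_self (hU : U * U = 1) (A : Matrix n n ℂ) : U * (U * A * U) * U = A := by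
  simp only [← Matrix.mul_assoc, hU, Matrix.one_mul]
  rw [Matrix.mul_assoc, hU, Matrix.mul_one]

lemma exp_conj_of_mul_self (hU : U * U = 1) (A : Matrix n n ℂ) :
    NormedSpace.exp (U * A * U) = U * NormedSpace.exp A * U := by
  have hinv : U⁻¹ = U := inv_eq_left_inv hU
  simpa only [hinv] using Matrix.exp_conj U A ⟨⟨U, U, hU, hU⟩, rfl⟩

end Involution

lemma star_mulVec_dotProduct_mulVec {n : Type*} [Fintype n] (U O : Matrix n n ℂ) (v : n → ℂ) :
    star (U *ᵥ v) ⬝ᵥ O *ᵥ (U *ᵥ v) = star v ⬝ᵥ (Uᴴ * O * U) *ᵥ v := by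
  rw [star_mulVec, mulVec_mulVec, dotProduct_mulVec, vecMul_vecMul, dotProduct_mulVec (star v),
    Matrix.mul_assoc]

def hadamardTransform (N : ℕ) : Matrix (Fin N → Fin 2) (Fin N → Fin 2) ℂ :=
  piKronecker fun _ => hadamard

lemma hadamardTransform_mul_self (N : ℕ) : hadamardTransform N * hadamardTransform N = 1 := by
  rw [hadamardTransform, piKronecker_mul, ← piKronecker_one]
  exact congrArg piKronecker (funext fun _ => hadamard_mul_self)

lemma conjTranspose_hadamardTransform (N : ℕ) :
    (hadamardTransform N)ᴴ = hadamardTransform N := by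
  rw [hadamardTransform, conjTranspose_piKronecker, conjTranspose_hadamard]

lemma hadamardTransform_conj_siteOp (N : ℕ) (k : Fin N) (m : Matrix (Fin 2) (Fin 2) ℂ) :
    hadamardTransform N * siteOp N k m * hadamardTransform N
      = siteOp N k (hadamard * m * hadamard) := by
  rw [siteOp_eq_piKronecker, siteOp_eq_piKronecker, hadamardTransform, piKronecker_mul,
    piKronecker_mul]
  congr 1
  ext1 j
  by_cases h : j = k
  · simp [h]
  · simp [h, hadamard_mul_self]

lemma siteOp_diagonal (N : ℕ) (k : Fin N) (d : Fin 2 → ℂ) :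
    siteOp N k (diagonal d) = diagonal fun s => d (s k) := by
  have : Pi.mulSingle k (diagonal d)
      = fun j => diagonal ((Pi.mulSingle k d : Fin N → Fin 2 → ℂ) j) :=
    (funext (Pi.apply_mulSingle (fun _ => diagonal) (fun _ => diagonal_one) k d)).symm
  rw [siteOp_eq_piKronecker, this, piKronecker_diagonal]
  congr 1
  ext1 s
  rw [Fintype.prod_eq_single k fun j hj => by simp [hj]]
  simp

def magnetization {n : ℕ} (s : Fin n → Fin 2) : ℂ := (∑ j, spinSign (s j)) / 2

lemma hadamardTransform_conj_Jx (N : ℕ) :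
    hadamardTransform N * Jx N * hadamardTransform N = diagonal magnetization := by
  simp only [Jx, Matrix.mul_smul, Matrix.smul_mul, Finset.mul_sum, Finset.sum_mul,
    hadamardTransform_conj_siteOp, hadamard_conj_pauliX, pauliZ_eq_diagonal, siteOp_diagonal]
  ext s t
  by_cases h : s = t
  · simp [h, magnetization, Matrix.sum_apply, div_eq_inv_mul]
  · simp [h, Matrix.sum_apply]

lemma exp_smul_Jx_mul_Jx (N : ℕ) (z : ℂ) :
    NormedSpace.exp (z • (Jx N * Jx N)) = hadamardTransform N *
      diagonal (fun s => cexp (z * magnetization s ^ 2)) * hadamardTransform N := by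
  have hW := hadamardTransform_mul_self N
  have hJ : z • (Jx N * Jx N) = hadamardTransform N *
      diagonal (fun s => z * magnetization s ^ 2) * hadamardTransform N := by
    rw [← conj_conj_of_mul_self hW (Jx N), hadamardTransform_conj_Jx,
      conj_mul_conj_of_mul_self hW, diagonal_mul_diagonal, ← Matrix.smul_mul, ← Matrix.mul_smul,
      ← diagonal_smul]
    simp only [pow_two]
    rfl
  rw [hJ, exp_conj_of_mul_self hW, exp_diagonal, Pi.exp_def, ← Complex.exp_eq_exp_ℂ]

def rotatedTwistedState {n : ℕ} (z : ℂ) (s : Fin n → Fin 2) : ℂ :=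
  cexp (z * magnetization s ^ 2) * ∏ j, spinSign (s j)

lemma star_magnetization {n : ℕ} (s : Fin n → Fin 2) :
    star (magnetization s) = magnetization s := by
  simp [magnetization, star_sum, star_spinSign]

lemma star_rotatedTwistedState {n : ℕ} (z : ℂ) (s : Fin n → Fin 2) :
    star (rotatedTwistedState z s) = rotatedTwistedState (star z) s := by
  simp only [rotatedTwistedState, star_mul', star_prod, star_spinSign]
  rw [Complex.star_def, ← Complex.exp_conj, map_mul, map_pow, ← Complex.star_def,
    star_magnetization]

lemma oneAxisTwisted_eq (N : ℕ) (θ : ℝ) :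
    oneAxisTwisted N θ = hadamardTransform N *ᵥ
      ((Real.sqrt 2 : ℂ)⁻¹ ^ N • rotatedTwistedState (-(θ / 2 : ℂ) * I)) := by
  have hDown : allDown N = Pi.single (fun _ => 1) 1 := by
    ext s
    simp [allDown, Pi.single_apply]
  rw [oneAxisTwisted, exp_smul_Jx_mul_Jx, ← mulVec_mulVec, ← mulVec_mulVec, hDown,
    mulVec_single_one]
  congr 1
  ext s
  simp [mulVec_diagonal, hadamardTransform, hadamard_apply_one, prod_mul_distrib,
    rotatedTwistedState]
  ring

lemma expVal_eq (N : ℕ) (θ : ℝ) (O : Matrix (Fin N → Fin 2) (Fin N → Fin 2) ℂ) :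
    expVal N θ O = 2⁻¹ ^ N * (rotatedTwistedState ((θ / 2 : ℂ) * I) ⬝ᵥ
      (hadamardTransform N * O * hadamardTransform N) *ᵥ
        rotatedTwistedState (-(θ / 2 : ℂ) * I)) := by
  have hstar : star (rotatedTwistedState (-(θ / 2 : ℂ) * I) : (Fin N → Fin 2) → ℂ)
      = rotatedTwistedState ((θ / 2 : ℂ) * I) := by
    ext s
    rw [Pi.star_apply, star_rotatedTwistedState]
    congr 1
    simp [conj_ofReal]
  have hc : star ((Real.sqrt 2 : ℂ)⁻¹ ^ N) = (Real.sqrt 2 : ℂ)⁻¹ ^ N := by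
    simp [conj_ofReal]
  rw [expVal, oneAxisTwisted_eq, star_mulVec_dotProduct_mulVec, conjTranspose_hadamardTransform,
    star_smul, hc, hstar, mulVec_smul, smul_dotProduct, dotProduct_smul, smul_smul, ← mul_pow,
    inv_sqrt_two_mul_self, smul_eq_mul]

lemma siteOp_zero_mul_siteOp_one (q : ℕ) (A B : Matrix (Fin 2) (Fin 2) ℂ) :
    siteOp (2 + q) ⟨0, by omega⟩ A * siteOp (2 + q) ⟨1, by omega⟩ B
      = piKronecker (Fin.append ![A, B] 1) := by
  rw [siteOp_eq_piKronecker, siteOp_eq_piKronecker, piKronecker_mul]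
  congr 1
  ext1 j
  refine Fin.addCases (fun i => ?_) (fun i => ?_) j
  · fin_cases i <;> simp [Pi.mulSingle_apply, Fin.ext_iff]
  · simp only [Fin.append_right, Pi.mul_apply, Pi.one_apply, Pi.mulSingle_apply, Fin.ext_iff,
      Fin.val_natAdd]
    rw [if_neg (by omega), if_neg (by omega), mul_one]

lemma dotProduct_piKronecker_append_one_mulVec {α R : Type*} [Fintype α] [DecidableEq α]
    [CommSemiring R] {p q : ℕ} (m : Fin p → Matrix α α R) (f g : (Fin (p + q) → α) → R) :
    f ⬝ᵥ piKronecker (Fin.append m 1) *ᵥ g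
      = ∑ a, ∑ b, piKronecker m a b * ∑ r, f (Fin.append a r) * g (Fin.append b r) := by
  have hsplit (F : (Fin (p + q) → α) → R) : ∑ s, F s = ∑ a, ∑ r, F (Fin.append a r) := by
    rw [← (Fin.appendEquiv p q).sum_comp, Fintype.sum_prod_type]
    rfl
  simp only [dotProduct, mulVec, hsplit, piKronecker_append_apply, piKronecker_one, one_apply,
    mul_ite, mul_one, mul_zero, ite_mul, zero_mul, Finset.sum_ite_eq, Finset.mem_univ, if_true,
    Finset.mul_sum]
  refine Finset.sum_congr rfl fun a _ => ?_
  rw [Finset.sum_comm]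
  exact Finset.sum_congr rfl fun b _ => Finset.sum_congr rfl fun r _ => mul_left_comm _ _ _

lemma sum_cexp_mul_sum_spinSign (w : ℂ) (q : ℕ) :
    ∑ r : Fin q → Fin 2, cexp (w * ∑ i, spinSign (r i)) = (2 * Complex.cosh w) ^ q := by
  rw [two_cosh, show cexp w + cexp (-w) = ∑ x, cexp (w * spinSign x) by simp [spinSign],
    Fintype.sum_pow]
  simp only [Finset.mul_sum, Complex.exp_sum]

lemma magnetization_append {p q : ℕ} (a : Fin p → Fin 2) (r : Fin q → Fin 2) :
    magnetization (Fin.append a r) = magnetization a + magnetization r := by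
  simp [magnetization, Fin.sum_univ_add, add_div]

lemma sum_rotatedTwistedState_append_mul {p q : ℕ} (z : ℂ) (a b : Fin p → Fin 2) :
    ∑ r : Fin q → Fin 2,
        rotatedTwistedState (-z) (Fin.append a r) * rotatedTwistedState z (Fin.append b r)
      = (∏ i, spinSign (a i)) * (∏ i, spinSign (b i)) *
          cexp (z * (magnetization b ^ 2 - magnetization a ^ 2)) *
          (2 * Complex.cosh (z * (magnetization b - magnetization a))) ^ q := by
  have hterm : ∀ r : Fin q → Fin 2,
      rotatedTwistedState (-z) (Fin.append a r) * rotatedTwistedState z (Fin.append b r)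
        = (∏ i, spinSign (a i)) * (∏ i, spinSign (b i)) *
            cexp (z * (magnetization b ^ 2 - magnetization a ^ 2)) *
            cexp (z * (magnetization b - magnetization a) * ∑ i, spinSign (r i)) := by
    intro r
    have hsq : (∏ i, spinSign (r i)) * ∏ i, spinSign (r i) = 1 := by
      simp [← prod_mul_distrib, spinSign_mul_self]
    have hexp : -z * (magnetization a + magnetization r) ^ 2
          + z * (magnetization b + magnetization r) ^ 2
        = z * (magnetization b ^ 2 - magnetization a ^ 2)
          + z * (magnetization b - magnetization a) * ∑ i, spinSign (r i) := by
      rw [show magnetization r = (∑ i, spinSign (r i)) / 2 from rfl]; ring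
    simp only [rotatedTwistedState, magnetization_append, Fin.prod_univ_add, Fin.append_left,
      Fin.append_right]
    calc _ = (∏ i, spinSign (a i)) * (∏ i, spinSign (b i))
            * ((∏ i, spinSign (r i)) * ∏ i, spinSign (r i))
            * (cexp (-z * (magnetization a + magnetization r) ^ 2)
              * cexp (z * (magnetization b + magnetization r) ^ 2)) := by ring
      _ = _ := by rw [hsq, ← Complex.exp_add, hexp, Complex.exp_add]; ring
  rw [Finset.sum_congr rfl fun r _ => hterm r, ← Finset.mul_sum, sum_cexp_mul_sum_spinSign]

lemma sum_spinSign_mul_cexp_mul_cosh_pow (z : ℂ) (q : ℕ) :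
    ∑ a : Fin 2 → Fin 2, ∑ b : Fin 2 → Fin 2, (∏ i, spinSign (b i)) *
        (cexp (z * (magnetization b ^ 2 - magnetization a ^ 2))
          * Complex.cosh (z * (magnetization b - magnetization a)) ^ q)
      = 2 * (Complex.cosh (2 * z) ^ q - 1) + 8 * Complex.sinh z * Complex.cosh z ^ q := by
  simp only [← (finTwoArrowEquiv (Fin 2)).symm.sum_comp, Fintype.sum_prod_type,
    finTwoArrowEquiv_symm_apply, Fin.sum_univ_two, Fin.prod_univ_two, magnetization, spinSign]
  norm_num
  rw [mul_comm 2 z]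
  linear_combination (-4 * Complex.cosh z ^ q) * Complex.two_sinh z

lemma expVal_siteOp_pauliMinus_mul (q : ℕ) (θ : ℝ) :
    expVal (2 + q) θ
        (siteOp (2 + q) ⟨0, by omega⟩ pauliMinus * siteOp (2 + q) ⟨1, by omega⟩ pauliMinus)
      = 16⁻¹ * ∑ a : Fin 2 → Fin 2, ∑ b : Fin 2 → Fin 2, (∏ i, spinSign (b i)) *
          (cexp (-(θ / 2 : ℂ) * I * (magnetization b ^ 2 - magnetization a ^ 2))
            * Complex.cosh (-(θ / 2 : ℂ) * I * (magnetization b - magnetization a)) ^ q) := by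
  have hW := hadamardTransform_mul_self (2 + q)
  have hM : ∀ a b : Fin 2 → Fin 2, piKronecker ![hadamard * pauliMinus * hadamard,
      hadamard * pauliMinus * hadamard] a b = (∏ i, spinSign (a i)) / 4 := by
    intro a b
    simp only [piKronecker_apply, Fin.prod_univ_two, Matrix.cons_val_zero, Matrix.cons_val_one,
      hadamard_conj_pauliMinus_apply]
    ring
  rw [expVal_eq, ← conj_mul_conj_of_mul_self hW, hadamardTransform_conj_siteOp,
    hadamardTransform_conj_siteOp, siteOp_zero_mul_siteOp_one,
    dotProduct_piKronecker_append_one_mulVec,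
    show (θ / 2 : ℂ) * I = -(-(θ / 2 : ℂ) * I) by ring]
  set z : ℂ := -(θ / 2 : ℂ) * I
  simp only [hM, sum_rotatedTwistedState_append_mul]
  simp only [Finset.mul_sum]
  refine Finset.sum_congr rfl fun a _ => Finset.sum_congr rfl fun b _ => ?_
  have ha : (∏ i, spinSign (a i)) * ∏ i, spinSign (a i) = 1 := by
    rw [← prod_mul_distrib]
    simp [spinSign_mul_self]
  have h2 : (2⁻¹ : ℂ) ^ q * 2 ^ q = 1 := by
    rw [← mul_pow]; norm_num
  rw [mul_pow, pow_add]
  linear_combination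
    ((∏ i, spinSign (b i)) * cexp (z * (magnetization b ^ 2 - magnetization a ^ 2)) *
      Complex.cosh (z * (magnetization b - magnetization a)) ^ q / 16) *
      ((2⁻¹ : ℂ) ^ q * 2 ^ q * ha + h2)

end Qubits

open Qubits in
/-- For the one-axis twisted state on `N ≥ 2` qubits,
`⟨σ_{1-} σ_{2-}⟩ = -(1 - cos^{N-2} θ)/8 - (i/2) sin(θ/2) cos^{N-2}(θ/2)`. -/
theorem oneAxisTwisted_sigma_mm (N : ℕ) (hN : 2 ≤ N) (θ : ℝ) :
    expVal N θ (siteOp N ⟨0, by omega⟩ pauliMinus * siteOp N ⟨1, by omega⟩ pauliMinus) =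
      -((1 - ((Real.cos θ : ℂ)) ^ (N - 2)) / 8) -
        (Complex.I / 2) * (Real.sin (θ / 2) : ℂ) * ((Real.cos (θ / 2) : ℂ)) ^ (N - 2) := by
  obtain ⟨q, rfl⟩ : ∃ q, N = 2 + q := ⟨N - 2, by omega⟩
  rw [expVal_siteOp_pauliMinus_mul, sum_spinSign_mul_cexp_mul_cosh_pow, Nat.add_sub_cancel_left]
  have hcosh : Complex.cosh (-(θ / 2 : ℂ) * I) = Real.cos (θ / 2) := by
    rw [neg_mul, Complex.cosh_neg, Complex.cosh_mul_I]; push_cast; rfl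
  have hcosh2 : Complex.cosh (2 * (-(θ / 2 : ℂ) * I)) = Real.cos θ := by
    rw [show 2 * (-(θ / 2 : ℂ) * I) = -(θ * I) by ring, Complex.cosh_neg, Complex.cosh_mul_I]
    push_cast; rfl
  have hsinh : Complex.sinh (-(θ / 2 : ℂ) * I) = -(Real.sin (θ / 2) * I) := by
    rw [neg_mul, Complex.sinh_neg, Complex.sinh_mul_I]; push_cast; rfl
  rw [hcosh, hcosh2, hsinh]
  ring

end OneAxisTwisting
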